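/- For every integer k ≥ 1 and every integer s ≥ 1, if a k-uniform [1,s]-almost intersecting multihypergraph F has exactly s·(2k choose k) edges (counted with multiplicity), then for any two edges X and Y of F, either the sub-multiset of edges of F disjoint from X is equal to the sub-multiset of edges of F disjoint from Y, or no edge of F is disjoint from both X and Y. -/

import Mathlib

/-!
Katona's averaging over linear orders of the vertex set. Call an edge `A` preceded in an order
if some edge disjoint from `A` lies entirely before `A`. In every order at most `s` edges are
preceded: all of them are disjoint from the edge that precedes the edge containing the earliest
vertex of a preceded edge. On the other hand, `B` lies before `A` in exactly a `1 / (2k choose k)`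
fraction of the orders, so every edge is preceded in at least that fraction; if some `A` were
disjoint from two different edges `B ≠ C`, some order puts `C` but not `B` before `A`, and the
fraction for `A` would be strictly larger. Summing over the `s * (2k choose k)` edges contradicts
the bound `s` per order. So all edges disjoint from a given edge coincide, which gives the
dichotomy.
-/

section

open Finset Equiv Function

variable {β γ : Type*}

lemma exists_subset_card_eq_forall_lt [DecidableEq β] [LinearOrder γ] {f : β → γ}
    (hf : Injective f) (T : Finset β) {k : ℕ} (hk : k ≤ #T) :
    ∃ S ⊆ T, #S = k ∧ ∀ x ∈ S, ∀ y ∈ T \ S, f x < f y := by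
  induction k with
  | zero => exact ⟨∅, empty_subset T, card_empty, by simp⟩
  | succ k ih =>
    obtain ⟨S, hST, hSk, hlt⟩ := ih (by omega)
    have hrest : (T \ S).Nonempty := by
      rw [← card_pos, card_sdiff_of_subset hST]; omega
    obtain ⟨m, hm, hmin⟩ := exists_min_image (T \ S) f hrest
    have hmS : m ∉ S := (mem_sdiff.1 hm).2
    refine ⟨insert m S, insert_subset (mem_sdiff.1 hm).1 hST,
      by rw [card_insert_of_notMem hmS, hSk], ?_⟩
    intro x hx y hy
    rw [sdiff_insert] at hy
    obtain ⟨hyS, hym⟩ := mem_erase.1 hy |>.symm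
    rcases mem_insert.1 hx with rfl | hxS
    · exact (hmin y hyS).lt_of_ne (hf.ne (Ne.symm hym))
    · exact hlt x hxS y hyS

lemma exists_perm_mapsTo_of_card_eq [DecidableEq β] {A B S : Finset β} (hAB : Disjoint A B)
    (hS : S ⊆ A ∪ B) (hcard : #S = #B) :
    ∃ σ : Perm β, (∀ b ∈ B, σ b ∈ S) ∧ ∀ a ∈ A, σ a ∈ (A ∪ B) \ S := by
  have hcard' : #A = #((A ∪ B) \ S) := by
    rw [card_sdiff_of_subset hS, card_union_of_disjoint hAB]; omega
  let eB := B.equivOfCardEq hcard.symm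
  let eA := A.equivOfCardEq hcard'
  obtain ⟨σ, hσ⟩ := Perm.exists_extending_pair
    (Sum.elim (Subtype.val : B → β) (Subtype.val : A → β))
    (Sum.elim (fun b => (eB b : β)) (fun a => (eA a : β)))
    (Subtype.val_injective.sumElim Subtype.val_injective
      fun b a h => disjoint_left.1 hAB (h ▸ a.2) b.2)
    ((Subtype.val_injective.comp eB.injective).sumElim (Subtype.val_injective.comp eA.injective)
      fun b a h => (mem_sdiff.1 (h ▸ (eA a).2)).2 (eB b).2)
  exact ⟨σ, fun b hb => hσ (.inl ⟨b, hb⟩) ▸ (eB _).2, fun a ha => hσ (.inr ⟨a, ha⟩) ▸ (eA _).2⟩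

def Precedes [LT γ] (π : β ≃ γ) (B A : Finset β) : Prop :=
  ∀ b ∈ B, ∀ a ∈ A, π b < π a

instance [LinearOrder γ] (π : β ≃ γ) (B A : Finset β) : Decidable (Precedes π B A) := by
  unfold Precedes; infer_instance

lemma card_equiv_le_choose_mul_card_precedes [Fintype β] [DecidableEq β] [Fintype γ]
    [DecidableEq γ] [LinearOrder γ] {A B : Finset β} (hAB : Disjoint A B) :
    Fintype.card (β ≃ γ) ≤ (#A + #B).choose #B * #{π : β ≃ γ | Precedes π B A} := by
  have hT : #(A ∪ B) = #A + #B := card_union_of_disjoint hAB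
  choose S hST hScard hSlt using fun π : β ≃ γ =>
    exists_subset_card_eq_forall_lt π.injective (A ∪ B) (k := #B) (by omega)
  choose! σ hσB hσA using fun S (hS : S ∈ powersetCard #B (A ∪ B)) =>
    exists_perm_mapsTo_of_card_eq hAB (mem_powersetCard.1 hS).1 (mem_powersetCard.1 hS).2
  -- `π` is recovered from the `#B`-subset `S` of `A ∪ B` that comes first under `π`,
  -- and from the order `(σ S).trans π` in which `B` precedes `A`.
  have hmaps : ∀ π : β ≃ γ, S π ∈ powersetCard #B (A ∪ B) :=
    fun π => mem_powersetCard.2 ⟨hST π, hScard π⟩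
  calc Fintype.card (β ≃ γ)
      ≤ #(powersetCard #B (A ∪ B) ×ˢ ({π | Precedes π B A} : Finset (β ≃ γ))) := by
        refine card_le_card_of_injOn (fun π => (S π, (σ (S π)).trans π)) ?_ ?_
        · intro π _
          refine mem_product.2 ⟨hmaps π, mem_filter.2 ⟨mem_univ _, ?_⟩⟩
          exact fun b hb a ha => hSlt π _ (hσB _ (hmaps π) b hb) _ (hσA _ (hmaps π) a ha)
        · intro π₁ _ π₂ _ h
          simp only [Prod.mk.injEq] at h
          rw [← h.1] at h
          exact Equiv.ext fun x => by simpa using congrArg (· ((σ (S π₁)).symm x)) h.2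
    _ = (#A + #B).choose #B * #{π : β ≃ γ | Precedes π B A} := by
        rw [card_product, card_powersetCard, hT]

lemma exists_equiv_fin_lt_of_lt [Fintype β] [LinearOrder γ] (f : β → γ) :
    ∃ π : β ≃ Fin (Fintype.card β), ∀ x y, f x < f y → π x < π y := by
  let e := Fintype.equivFin β
  refine ⟨e.trans (Tuple.sort (f ∘ e.symm)).symm, fun x y hxy => lt_of_not_ge fun hyx => ?_⟩
  exact hxy.not_ge (by simpa using Tuple.monotone_sort (f ∘ e.symm) hyx)

lemma exists_precedes_and_not_precedes [Fintype β] [DecidableEq β] {A B C : Finset β}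
    (hA : A.Nonempty) (hAB : Disjoint A B) (hAC : Disjoint A C) (hBC : ¬ B ⊆ C) :
    ∃ π : β ≃ Fin (Fintype.card β), Precedes π C A ∧ ¬ Precedes π B A := by
  obtain ⟨π, hπ⟩ := exists_equiv_fin_lt_of_lt
    fun x => if x ∈ C then 0 else if x ∈ A then 1 else 2
  obtain ⟨a, ha⟩ := hA
  obtain ⟨x, hxB, hxC⟩ := not_subset.1 hBC
  refine ⟨π, fun c hc a' ha' => hπ c a' ?_, fun h => (h x hxB a ha).not_gt (hπ a x ?_)⟩
  · simp [hc, disjoint_left.1 hAC ha', ha']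
  · simp [hxC, disjoint_left.1 hAC ha, ha, disjoint_right.1 hAB hxB]

def PrecededByDisjoint [DecidableEq β] [LT γ] (F : Multiset (Finset β)) (π : β ≃ γ)
    (A : Finset β) : Prop :=
  ∃ B ∈ F, Disjoint A B ∧ Precedes π B A

instance [DecidableEq β] [LinearOrder γ] (F : Multiset (Finset β)) (π : β ≃ γ) :
    DecidablePred (PrecededByDisjoint F π) :=
  fun _ => Multiset.decidableExistsMultiset

lemma countP_precededByDisjoint_le [DecidableEq β] [LinearOrder γ] {F : Multiset (Finset β)}
    {s : ℕ} (hne : ∀ A ∈ F, A.Nonempty)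
    (hs : ∀ B ∈ F, Multiset.card (F.filter fun A => Disjoint B A) ≤ s) (π : β ≃ γ) :
    F.countP (PrecededByDisjoint F π) ≤ s := by
  by_cases h : ∃ A ∈ F, PrecededByDisjoint F π A
  swap
  · simp [Multiset.countP_eq_zero.2 fun A hA hAp => h ⟨A, hA, hAp⟩]
  let U := ((F.filter (PrecededByDisjoint F π)).toFinset).biUnion id
  have hU : U.Nonempty := by
    obtain ⟨A, hA, hAp⟩ := h
    obtain ⟨x, hx⟩ := hne A hA
    exact ⟨x, mem_biUnion.2 ⟨A, by simpa using ⟨hA, hAp⟩, hx⟩⟩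
  obtain ⟨x₀, hx₀, hmin⟩ := exists_min_image U π hU
  obtain ⟨A₀, hA₀, hx₀A₀⟩ := mem_biUnion.1 hx₀
  obtain ⟨B₀, hB₀, -, hB₀A₀⟩ := (Multiset.mem_filter.1 (Multiset.mem_toFinset.1 hA₀)).2
  -- `B₀` lies before `x₀`, the earliest vertex of any preceded edge.
  have hdisj : ∀ A ∈ F, PrecededByDisjoint F π A → Disjoint B₀ A := by
    intro A hA hAp
    refine disjoint_left.2 fun t htB htA => (hB₀A₀ t htB x₀ hx₀A₀).not_ge (hmin t ?_)
    exact mem_biUnion.2 ⟨A, by simpa using ⟨hA, hAp⟩, htA⟩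
  calc F.countP (PrecededByDisjoint F π) = Multiset.card (F.filter (PrecededByDisjoint F π)) :=
        Multiset.countP_eq_card_filter _ _
    _ ≤ Multiset.card (F.filter fun A => Disjoint B₀ A) :=
        Multiset.card_le_card <| Multiset.le_filter.2 ⟨Multiset.filter_le _ _,
          fun A hA => hdisj A (Multiset.mem_filter.1 hA).1 (Multiset.mem_filter.1 hA).2⟩
    _ ≤ s := hs B₀ hB₀

lemma sum_countP_eq_sum_card_filter {ι κ : Type*} (s : Finset ι) (M : Multiset κ)
    (P : ι → κ → Prop) [∀ i, DecidablePred (P i)] [∀ x, DecidablePred (P · x)] :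
    ∑ i ∈ s, M.countP (P i) = (M.map fun x => #{i ∈ s | P i x}).sum := by
  induction M using Multiset.induction_on with
  | empty => simp
  | cons x M ih =>
    simp only [Multiset.countP_cons, Multiset.map_cons, Multiset.sum_cons, sum_add_distrib, ih,
      card_filter]
    ring

lemma card_equiv_le_choose_mul_card_precededByDisjoint [Fintype β] [DecidableEq β] [Fintype γ]
    [DecidableEq γ] [LinearOrder γ] {F : Multiset (Finset β)} {A B : Finset β} (hB : B ∈ F)
    (hAB : Disjoint A B) :
    Fintype.card (β ≃ γ) ≤ (#A + #B).choose #B * #{π : β ≃ γ | PrecededByDisjoint F π A} :=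
  (card_equiv_le_choose_mul_card_precedes hAB).trans <| Nat.mul_le_mul_left _ <|
    card_le_card <| monotone_filter_right _ fun _ _ h => ⟨B, hB, hAB, h⟩

lemma card_equiv_lt_choose_mul_card_precededByDisjoint [Fintype β] [DecidableEq β]
    {F : Multiset (Finset β)} {A B C : Finset β} (hA : A.Nonempty) (hB : B ∈ F) (hC : C ∈ F)
    (hAB : Disjoint A B) (hAC : Disjoint A C) (hBC : ¬ B ⊆ C) :
    Fintype.card (β ≃ Fin (Fintype.card β)) <
      (#A + #B).choose #B * #{π : β ≃ Fin (Fintype.card β) | PrecededByDisjoint F π A} := by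
  obtain ⟨π₀, hC₀, hB₀⟩ := exists_precedes_and_not_precedes hA hAB hAC hBC
  have hssub : ({π | Precedes π B A} : Finset (β ≃ Fin (Fintype.card β))) ⊂
      ({π | PrecededByDisjoint F π A} : Finset (β ≃ Fin (Fintype.card β))) :=
    ssubset_iff_of_subset (monotone_filter_right _ fun _ _ h => ⟨B, hB, hAB, h⟩) |>.2
      ⟨π₀, by simpa using ⟨C, hC, hAC, hC₀⟩, by simpa using hB₀⟩
  exact (card_equiv_le_choose_mul_card_precedes hAB).trans_lt <|
    Nat.mul_lt_mul_of_pos_left (card_lt_card hssub) (Nat.choose_pos (Nat.le_add_left _ _))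

theorem eq_of_disjoint_of_disjoint_of_fintype [Fintype β] [DecidableEq β] {k s : ℕ}
    (hk : 1 ≤ k) {F : Multiset (Finset β)} (huniform : ∀ A ∈ F, #A = k)
    (hai : ∀ A ∈ F,
      1 ≤ Multiset.card (F.filter fun B => Disjoint A B) ∧
      Multiset.card (F.filter fun B => Disjoint A B) ≤ s)
    (hcard : Multiset.card F = s * (2 * k).choose k)
    {A B C : Finset β} (hA : A ∈ F) (hB : B ∈ F) (hC : C ∈ F)
    (hAB : Disjoint A B) (hAC : Disjoint A C) : B = C := by
  by_contra hne
  have hBC : ¬ B ⊆ C := fun h =>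
    hne (eq_of_subset_of_card_le h (by rw [huniform B hB, huniform C hC]))
  have hchoose : ∀ A ∈ F, ∀ B ∈ F, (#A + #B).choose #B = (2 * k).choose k := by
    intro A hA B hB; rw [huniform A hA, huniform B hB, two_mul]
  set N := Fintype.card (β ≃ Fin (Fintype.card β))
  let cnt A := #{π : β ≃ Fin (Fintype.card β) | PrecededByDisjoint F π A}
  have hle : ∀ A ∈ F, N ≤ (2 * k).choose k * cnt A := by
    intro A hA
    obtain ⟨B, hB⟩ := Multiset.card_pos_iff_exists_mem.1 (hai A hA).1
    rw [Multiset.mem_filter] at hB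
    simpa only [hchoose A hA B hB.1] using
      card_equiv_le_choose_mul_card_precededByDisjoint hB.1 hB.2
  have hlt : N < (2 * k).choose k * cnt A := by
    have hAne : A.Nonempty := card_pos.1 (by rw [huniform A hA]; omega)
    simpa only [hchoose A hA B hB] using
      card_equiv_lt_choose_mul_card_precededByDisjoint hAne hB hC hAB hAC hBC
  have hsum : (F.map cnt).sum ≤ N * s := by
    rw [← sum_countP_eq_sum_card_filter]
    calc ∑ π, F.countP (PrecededByDisjoint F π)
          ≤ #(univ : Finset (β ≃ Fin (Fintype.card β))) • s :=
          sum_le_card_nsmul _ _ _ fun π _ => countP_precededByDisjoint_le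
            (fun A hA => card_pos.1 (by rw [huniform A hA]; omega)) (fun B hB => (hai B hB).2) π
      _ = N * s := by rw [card_univ, smul_eq_mul]
  have := Multiset.sum_lt_sum (fun A hA => hle A hA) ⟨A, hA, hlt⟩
  rw [Multiset.map_const', Multiset.sum_replicate, Multiset.sum_map_mul_left, hcard,
    smul_eq_mul] at this
  nlinarith

lemma Finset.disjoint_subtype_iff {α : Type*} {p : α → Prop} [DecidablePred p] {A B : Finset α}
    (hA : ∀ x ∈ A, p x) (hB : ∀ x ∈ B, p x) :
    Disjoint (A.subtype p) (B.subtype p) ↔ Disjoint A B := by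
  rw [← disjoint_map (Embedding.subtype p), subtype_map_of_mem hA, subtype_map_of_mem hB]

theorem eq_of_disjoint_of_disjoint {α : Type*} [DecidableEq α] {k s : ℕ} (hk : 1 ≤ k)
    {F : Multiset (Finset α)} (huniform : ∀ A ∈ F, #A = k)
    (hai : ∀ A ∈ F,
      1 ≤ Multiset.card (F.filter fun B => Disjoint A B) ∧
      Multiset.card (F.filter fun B => Disjoint A B) ≤ s)
    (hcard : Multiset.card F = s * (2 * k).choose k)
    {A B C : Finset α} (hA : A ∈ F) (hB : B ∈ F) (hC : C ∈ F)
    (hAB : Disjoint A B) (hAC : Disjoint A C) : B = C := by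
  set V := F.toFinset.sup id
  have hV : ∀ A ∈ F, ∀ x ∈ A, x ∈ V := fun A hA x hx =>
    le_sup (f := id) (Multiset.mem_toFinset.2 hA) hx
  have hdisj : ∀ A ∈ F, ∀ B ∈ F,
      Disjoint (A.subtype (· ∈ V)) (B.subtype (· ∈ V)) ↔ Disjoint A B :=
    fun A hA B hB => disjoint_subtype_iff (hV A hA) (hV B hB)
  have hfilter : ∀ A ∈ F,
      Multiset.card ((F.map (Finset.subtype (· ∈ V))).filter
        fun B' => Disjoint (A.subtype (· ∈ V)) B') =
      Multiset.card (F.filter fun B => Disjoint A B) := by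
    intro A hA
    rw [Multiset.filter_map, Multiset.card_map]
    exact congrArg _ (Multiset.filter_congr fun B hB => hdisj A hA B hB)
  have hsub := eq_of_disjoint_of_disjoint_of_fintype (β := V) hk
    (F := F.map (Finset.subtype (· ∈ V)))
    (Multiset.forall_mem_map_iff.2 fun A hA => by
      rw [← card_map (Embedding.subtype _), subtype_map_of_mem (hV A hA), huniform A hA])
    (Multiset.forall_mem_map_iff.2 fun A hA => by rw [hfilter A hA]; exact hai A hA)
    (by rw [Multiset.card_map, hcard])
    (Multiset.mem_map_of_mem _ hA) (Multiset.mem_map_of_mem _ hB) (Multiset.mem_map_of_mem _ hC)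
    ((hdisj A hA B hB).2 hAB) ((hdisj A hA C hC).2 hAC)
  rw [← subtype_map_of_mem (hV B hB), hsub, subtype_map_of_mem (hV C hC)]

end

theorem stmt_3_general {α : Type*} [DecidableEq α] (k s : ℕ) (hk : 1 ≤ k)
    (F : Multiset (Finset α))
    (huniform : ∀ A ∈ F, A.card = k)
    (hai : ∀ A ∈ F,
      1 ≤ Multiset.card (F.filter fun B => Disjoint A B) ∧
      Multiset.card (F.filter fun B => Disjoint A B) ≤ s)
    (hcard : Multiset.card F = s * Nat.choose (2 * k) k) :
    ∀ X ∈ F, ∀ Y ∈ F,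
      (F.filter fun B => Disjoint X B) = (F.filter fun B => Disjoint Y B) ∨
      ∀ B ∈ F, ¬(Disjoint X B ∧ Disjoint Y B) := by
  have key := @eq_of_disjoint_of_disjoint _ _ k s hk F huniform hai hcard
  intro X hX Y hY
  by_cases h : ∃ B ∈ F, Disjoint X B ∧ Disjoint Y B
  · obtain ⟨B, hB, hXB, hYB⟩ := h
    refine .inl (Multiset.filter_congr fun D hD => ⟨fun hXD => ?_, fun hYD => ?_⟩)
    · rwa [← key hX hB hD hXB hXD]
    · rwa [← key hY hB hD hYB hYD]
  · exact .inr fun B hB hXY => h ⟨B, hB, hXY⟩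

/-- If a `k`-uniform `[1,s]`-almost intersecting multihypergraph has
exactly `s * (2k choose k)` edges, then for any two edges `X, Y`, either the sub-multiset
of edges disjoint from `X` equals the sub-multiset of edges disjoint from `Y`,
or no edge is disjoint from both `X` and `Y`. -/
theorem stmt_3 {α : Type*} [DecidableEq α] (k s : ℕ) (hk : 1 ≤ k) (hs : 1 ≤ s)
    (F : Multiset (Finset α))
    (huniform : ∀ A ∈ F, A.card = k)
    (hai : ∀ A ∈ F,
      1 ≤ Multiset.card (F.filter fun B => Disjoint A B) ∧
      Multiset.card (F.filter fun B => Disjoint A B) ≤ s)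
    (hcard : Multiset.card F = s * Nat.choose (2 * k) k) :
    ∀ X ∈ F, ∀ Y ∈ F,
      (F.filter fun B => Disjoint X B) = (F.filter fun B => Disjoint Y B) ∨
      ∀ B ∈ F, ¬(Disjoint X B ∧ Disjoint Y B) :=
  stmt_3_general k s hk F huniform hai hcard
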